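/- (Proposition D) For the unique value function f of the 3PG, f(010111 | {2,3}) = 8 and f(010111 | {1,2}) = 7; i.e., in the states where exactly the relations '1 beats 2' and '1 beats 3' are missing, the value is 8 when the ring is {2,3} and 7 when the ring is {1,2}. -/
import Mathlib


/-- A state of the three-player game (3PG): `beats i j` records whether the event
"player `i` has beaten player `j`" has occurred, and `ring` is the (unordered)
pair of the two players currently in the ring. -/
structure PGState where
  beats : Fin 3 → Fin 3 → Bool
  ring : Finset (Fin 3)
  card_ring : ring.card = 2

/-- A state is terminal if all six win-lose relations have occurred. -/
def PGState.Terminal (S : PGState) : Prop :=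
  ∀ i j : Fin 3, i ≠ j → S.beats i j = true

/-- The successor state in which player `w` beats player `l` in the current round
and the third player `t` enters the ring. -/
def PGState.succ (S : PGState) (w l t : Fin 3) (hwt : w ≠ t) : PGState :=
  ⟨fun i j => if i = w ∧ j = l then true else S.beats i j, {w, t}, Finset.card_pair hwt⟩

/-- `f` is a value function for the 3PG: it vanishes on terminal states and
satisfies the reduction rule `f S = 1 + (f S₁ + f S₂)/2` on non-terminal states,
where `S₁` and `S₂` are the two successors of `S`. -/
def IsValueFn (f : PGState → ℝ) : Prop :=
  (∀ S : PGState, S.Terminal → f S = 0) ∧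
  ∀ (S : PGState) (t₁ t₂ t₃ : Fin 3) (_ : t₁ ≠ t₂) (h₁₃ : t₁ ≠ t₃) (h₂₃ : t₂ ≠ t₃),
    S.ring = {t₁, t₂} → ¬ S.Terminal →
    f S = 1 + (f (S.succ t₁ t₂ t₃ h₁₃) + f (S.succ t₂ t₁ t₃ h₂₃)) / 2

/-- The win-lose record `(b₁b₂b₃b₄b₅b₆)`, where the six bits indicate whether the
relations "1 beats 2", "2 beats 1", "1 beats 3", "3 beats 1", "2 beats 3",
"3 beats 2" have occurred (players 1, 2, 3 are `0, 1, 2 : Fin 3`). -/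
def mkBeats (b₁ b₂ b₃ b₄ b₅ b₆ : Bool) : Fin 3 → Fin 3 → Bool := fun i j =>
  if i = 0 ∧ j = 1 then b₁
  else if i = 1 ∧ j = 0 then b₂
  else if i = 0 ∧ j = 2 then b₃
  else if i = 2 ∧ j = 0 then b₄
  else if i = 1 ∧ j = 2 then b₅
  else if i = 2 ∧ j = 1 then b₆
  else false

/-- The state `(b₁b₂b₃b₄b₅b₆ | {t₁, t₂})`. -/
def mkState (b₁ b₂ b₃ b₄ b₅ b₆ : Bool) (t₁ t₂ : Fin 3) (h : t₁ ≠ t₂ := by decide) :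
    PGState :=
  ⟨mkBeats b₁ b₂ b₃ b₄ b₅ b₆, {t₁, t₂}, Finset.card_pair h⟩

lemma state_eq {S T : PGState} (hb : S.beats = T.beats) (hr : S.ring = T.ring) : S = T := by
  cases S; cases T; simp_all

instance (S : PGState) : Decidable S.Terminal :=
  decidable_of_iff (∀ i j : Fin 3, i ≠ j → S.beats i j = true) Iff.rfl

/-- Proposition D: `f(010111|{2,3}) = 8` and `f(010111|{1,2}) = 7`. -/
theorem threePG_propD (f : PGState → ℝ) (hf : IsValueFn f) :
    f (mkState false true false true true true 1 2) = 8 ∧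
    f (mkState false true false true true true 0 1) = 7 := by
  set A := mkState false true false true true true 1 2 with hA
  set B := mkState false true false true true true 0 1 with hB
  set C := mkState false true false true true true 0 2 with hC
  set D := mkState true true false true true true 0 2 with hD
  set F := mkState true true false true true true 1 2 with hF
  set G := mkState true true false true true true 0 1 with hG
  set E := mkState false true true true true true 0 1 with hE
  set H := mkState false true true true true true 1 2 with hH
  set I := mkState false true true true true true 0 2 with hI
  set T1 := mkState true true true true true true 0 1 with hT1
  set T2 := mkState true true true true true true 0 2 with hT2
  have hT1 : f T1 = 0 := hf.1 _ (by decide)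
  have hT2 : f T2 = 0 := hf.1 _ (by decide)
  have eA : f A = 1 + (f B + f C) / 2 := by
    have h := hf.2 A 1 2 0 (by decide) (by decide) (by decide) rfl (by decide)
    rw [show A.succ 1 2 0 (by decide) = B from
        state_eq (by funext i j; fin_cases i <;> fin_cases j <;> rfl) (by decide),
      show A.succ 2 1 0 (by decide) = C from
        state_eq (by funext i j; fin_cases i <;> fin_cases j <;> rfl) (by decide)] at h
    exact h
  have eB : f B = 1 + (f D + f A) / 2 := by
    have h := hf.2 B 0 1 2 (by decide) (by decide) (by decide) rfl (by decide)
    rw [show B.succ 0 1 2 (by decide) = D from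
        state_eq (by funext i j; fin_cases i <;> fin_cases j <;> rfl) (by decide),
      show B.succ 1 0 2 (by decide) = A from
        state_eq (by funext i j; fin_cases i <;> fin_cases j <;> rfl) (by decide)] at h
    exact h
  have eC : f C = 1 + (f E + f A) / 2 := by
    have h := hf.2 C 0 2 1 (by decide) (by decide) (by decide) rfl (by decide)
    rw [show C.succ 0 2 1 (by decide) = E from
        state_eq (by funext i j; fin_cases i <;> fin_cases j <;> rfl) (by decide),
      show C.succ 2 0 1 (by decide) = A from
        state_eq (by funext i j; fin_cases i <;> fin_cases j <;> rfl) (by decide)] at h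
    exact h
  have eD : f D = 1 + (f T1 + f F) / 2 := by
    have h := hf.2 D 0 2 1 (by decide) (by decide) (by decide) rfl (by decide)
    rw [show D.succ 0 2 1 (by decide) = T1 from
        state_eq (by funext i j; fin_cases i <;> fin_cases j <;> rfl) (by decide),
      show D.succ 2 0 1 (by decide) = F from
        state_eq (by funext i j; fin_cases i <;> fin_cases j <;> rfl) (by decide)] at h
    exact h
  have eF : f F = 1 + (f G + f D) / 2 := by
    have h := hf.2 F 1 2 0 (by decide) (by decide) (by decide) rfl (by decide)
    rw [show F.succ 1 2 0 (by decide) = G from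
        state_eq (by funext i j; fin_cases i <;> fin_cases j <;> rfl) (by decide),
      show F.succ 2 1 0 (by decide) = D from
        state_eq (by funext i j; fin_cases i <;> fin_cases j <;> rfl) (by decide)] at h
    exact h
  have eG : f G = 1 + (f D + f F) / 2 := by
    have h := hf.2 G 0 1 2 (by decide) (by decide) (by decide) rfl (by decide)
    rw [show G.succ 0 1 2 (by decide) = D from
        state_eq (by funext i j; fin_cases i <;> fin_cases j <;> rfl) (by decide),
      show G.succ 1 0 2 (by decide) = F from
        state_eq (by funext i j; fin_cases i <;> fin_cases j <;> rfl) (by decide)] at h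
    exact h
  have eE : f E = 1 + (f T2 + f H) / 2 := by
    have h := hf.2 E 0 1 2 (by decide) (by decide) (by decide) rfl (by decide)
    rw [show E.succ 0 1 2 (by decide) = T2 from
        state_eq (by funext i j; fin_cases i <;> fin_cases j <;> rfl) (by decide),
      show E.succ 1 0 2 (by decide) = H from
        state_eq (by funext i j; fin_cases i <;> fin_cases j <;> rfl) (by decide)] at h
    exact h
  have eH : f H = 1 + (f E + f I) / 2 := by
    have h := hf.2 H 1 2 0 (by decide) (by decide) (by decide) rfl (by decide)
    rw [show H.succ 1 2 0 (by decide) = E from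
        state_eq (by funext i j; fin_cases i <;> fin_cases j <;> rfl) (by decide),
      show H.succ 2 1 0 (by decide) = I from
        state_eq (by funext i j; fin_cases i <;> fin_cases j <;> rfl) (by decide)] at h
    exact h
  have eI : f I = 1 + (f E + f H) / 2 := by
    have h := hf.2 I 0 2 1 (by decide) (by decide) (by decide) rfl (by decide)
    rw [show I.succ 0 2 1 (by decide) = E from
        state_eq (by funext i j; fin_cases i <;> fin_cases j <;> rfl) (by decide),
      show I.succ 2 0 1 (by decide) = H from
        state_eq (by funext i j; fin_cases i <;> fin_cases j <;> rfl) (by decide)] at h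
    exact h
  constructor <;> linarith
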